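/- Let M be a MAGNN with L layers, let D and D̄ be datasets, and let π : con(D) → con(D̄) be a map such that: (i) for every unary predicate A and every c ∈ con(D), A(c) ∈ D implies A(π(c)) ∈ D̄; and (ii) for every c ∈ con(D) and every binary predicate P, π restricts to a bijection from { d ∈ con(D) : P(c,d) ∈ D } onto { e ∈ con(D̄) : P(π(c),e) ∈ D̄ }. Then for every ℓ ∈ {0,…,L}, every c ∈ con(D), and every component index i, v^c_ℓ(D)[i] ≤ v^{π(c)}_ℓ(D̄)[i], where v^c_ℓ(D) and v^{π(c)}_ℓ(D̄) denote the layer-ℓ vectors that M assigns to c on input D and to π(c) on input D̄, respectively. -/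

import Mathlib

open scoped BigOperators

namespace KG

/-- A fact over a signature with `δ` unary predicates (indexed by `Fin δ`) and
binary predicates indexed by `Col`; constants are natural numbers. -/
inductive Fact (δ : ℕ) (Col : Type) where
  | unary : Fin δ → ℕ → Fact δ Col
  | binary : Col → ℕ → ℕ → Fact δ Col
deriving DecidableEq

/-- A dataset is a finite set of facts. -/
abbrev Dataset (δ : ℕ) (Col : Type) [DecidableEq Col] := Finset (Fact δ Col)

variable {δ : ℕ} {Col : Type} [DecidableEq Col] [Fintype Col]

/-- The (finite) set of constants occurring in a dataset. -/
def conD (D : Dataset δ Col) : Finset ℕ :=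
  D.biUnion fun f =>
    match f with
    | .unary _ a => {a}
    | .binary _ a b => {a, b}

/-- The `P`-successors of `a` in `D`. -/
def nbrs (D : Dataset δ Col) (P : Col) (a : ℕ) : Finset ℕ :=
  (conD D).filter fun d => Fact.binary P a d ∈ D

/-- A mean-aggregation GNN with `L ≥ 1` layers, over the signature with `δ` unary
predicates and binary predicates `Col`.  `dims ℓ` is the dimension of the layer-`ℓ`
vectors, with `dims 0 = dims L = δ`; `A ℓ` and `B P ℓ` are the matrices and `bias ℓ`
the bias vector used to compute the layer-`(ℓ+1)` vectors; `act ℓ` is the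
(monotonically increasing, continuous, non-negatively valued) activation function
applied there, and `t` is the classification threshold. -/
structure GNN (δ : ℕ) (Col : Type) where
  L : ℕ
  hL : 1 ≤ L
  dims : ℕ → ℕ
  dims0 : dims 0 = δ
  dimsL : dims L = δ
  A : (ℓ : ℕ) → Matrix (Fin (dims (ℓ + 1))) (Fin (dims ℓ)) ℝ
  B : Col → (ℓ : ℕ) → Matrix (Fin (dims (ℓ + 1))) (Fin (dims ℓ)) ℝ
  bias : (ℓ : ℕ) → Fin (dims (ℓ + 1)) → ℝ
  act : ℕ → ℝ → ℝ
  act_mono : ∀ ℓ, Monotone (act ℓ)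
  act_cont : ∀ ℓ, Continuous (act ℓ)
  act_nonneg : ∀ ℓ x, 0 ≤ act ℓ x
  t : ℝ

/-- The layer-`ℓ` vector that the GNN `M` assigns to the constant `a` on input
dataset `D`.  The mean of an empty family is the zero vector (`0 / 0 = 0` in `ℝ`). -/
noncomputable def GNN.val (M : GNN δ Col) (D : Dataset δ Col) :
    (ℓ : ℕ) → ℕ → Fin (M.dims ℓ) → ℝ
  | 0, a, i => if Fact.unary (Fin.cast M.dims0 i) a ∈ D then (1 : ℝ) else 0
  | ℓ + 1, a, i =>
      M.act ℓ (M.bias ℓ i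
        + (M.A ℓ).mulVec (fun j => M.val D ℓ a j) i
        + ∑ P : Col, (M.B P ℓ).mulVec
            (fun j => (∑ d ∈ nbrs D P a, M.val D ℓ d j) / ((nbrs D P a).card : ℝ)) i)

/-- The dataset transformation induced by the GNN `M`:
`T_M(D) = { Uᵢ(a) : a ∈ con(D), v^a_L[i] ≥ t }`. -/
def GNN.T (M : GNN δ Col) (D : Dataset δ Col) : Set (Fact δ Col) :=
  { f | ∃ (A : Fin δ) (a : ℕ), f = Fact.unary A a ∧ a ∈ conD D ∧
      M.t ≤ M.val D M.L a (Fin.cast M.dimsL.symm A) }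

/-- A GNN is monotonic (is a MAGNN) if all matrix entries are non-negative. -/
def GNN.Monotonic (M : GNN δ Col) : Prop :=
  (∀ ℓ i j, 0 ≤ M.A ℓ i j) ∧ (∀ P ℓ i j, 0 ≤ M.B P ℓ i j)

/-- Concepts in the syntax `C ::= ⊤ | A | C ⊓ C' | C ⊔ C' | ≥ₙ P.C`
(`∃P.C` is `≥₁ P.C`); ELUQ concepts are those in which every `≥ₙ` has `n ≥ 1`. -/
inductive Concept (δ : ℕ) (Col : Type) where
  | top : Concept δ Col
  | atom : Fin δ → Concept δ Col
  | and : Concept δ Col → Concept δ Col → Concept δ Col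
  | or : Concept δ Col → Concept δ Col → Concept δ Col
  | atLeast : ℕ → Col → Concept δ Col → Concept δ Col
deriving DecidableEq

/-- A concept is a (well-formed) ELUQ concept when every `≥ₙ` has `n` a positive integer. -/
inductive ELUQ : Concept δ Col → Prop
  | top : ELUQ .top
  | atom (A : Fin δ) : ELUQ (.atom A)
  | and {C₁ C₂} : ELUQ C₁ → ELUQ C₂ → ELUQ (.and C₁ C₂)
  | or {C₁ C₂} : ELUQ C₁ → ELUQ C₂ → ELUQ (.or C₁ C₂)
  | atLeast {C} (n : ℕ) (P : Col) (hn : 1 ≤ n) : ELUQ C → ELUQ (.atLeast n P C)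

/-- Satisfaction of a concept by a constant over a dataset. -/
def sat (D : Dataset δ Col) : ℕ → Concept δ Col → Prop
  | _, .top => True
  | c, .atom A => Fact.unary A c ∈ D
  | c, .and C₁ C₂ => sat D c C₁ ∧ sat D c C₂
  | c, .or C₁ C₂ => sat D c C₁ ∨ sat D c C₂
  | c, .atLeast n P C =>
      ∃ S : Finset ℕ, S.card = n ∧ ∀ d ∈ S, Fact.binary P c d ∈ D ∧ sat D d C

/-- A rule `C ⊑ A`. -/
structure Rule (δ : ℕ) (Col : Type) where
  body : Concept δ Col
  head : Fin δ
deriving DecidableEq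

/-- Immediate consequences of a rule on a dataset. -/
def Rule.T (r : Rule δ Col) (D : Dataset δ Col) : Set (Fact δ Col) :=
  { f | ∃ a : ℕ, f = Fact.unary r.head a ∧ a ∈ conD D ∧ sat D a r.body }

/-- A rule is sound for a GNN if its consequences are always among the GNN's. -/
def Sound (r : Rule δ Col) (M : GNN δ Col) : Prop :=
  ∀ D : Dataset δ Col, r.T D ⊆ M.T D


lemma mem_conD_of_binary_right {D : Dataset δ Col} {P : Col} {a b : ℕ}
    (h : Fact.binary P a b ∈ D) : b ∈ conD D := by
  simp only [conD, Finset.mem_biUnion]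
  exact ⟨Fact.binary P a b, h, by simp⟩

lemma mem_nbrs {D : Dataset δ Col} {P : Col} {a d : ℕ} :
    d ∈ nbrs D P a ↔ Fact.binary P a d ∈ D := by
  constructor
  · intro h; exact (Finset.mem_filter.mp h).2
  · intro h; exact Finset.mem_filter.mpr ⟨mem_conD_of_binary_right h, h⟩

lemma val_nonneg (M : GNN δ Col) (D : Dataset δ Col) (ℓ : ℕ) (a : ℕ)
    (i : Fin (M.dims ℓ)) : 0 ≤ M.val D ℓ a i := by
  cases ℓ with
  | zero => simp only [GNN.val]; split <;> norm_num
  | succ ℓ => exact M.act_nonneg ℓ _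

/-- Let `M` be a MAGNN, `D`, `D̄` datasets, and `π` a map on
constants such that (i) unary facts are preserved on `con(D)`, and (ii) for every
`c ∈ con(D)` and binary predicate `P`, `π` restricts to a bijection from the
`P`-successors of `c` in `D` onto the `P`-successors of `π c` in `D̄`.  Then for
every layer `ℓ ∈ {0,…,L}`, every `c ∈ con(D)`, and every component `i`,
`v^c_ℓ(D)[i] ≤ v^{π c}_ℓ(D̄)[i]`. -/
theorem map_val_le (M : GNN δ Col) (hM : M.Monotonic)
    (D Dbar : Dataset δ Col) (π : ℕ → ℕ)
    (hunary : ∀ A : Fin δ, ∀ c ∈ conD D,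
      Fact.unary A c ∈ D → Fact.unary A (π c) ∈ Dbar)
    (hbij : ∀ c ∈ conD D, ∀ P : Col,
      Set.BijOn π {d : ℕ | Fact.binary P c d ∈ D}
        {e : ℕ | Fact.binary P (π c) e ∈ Dbar})
    (ℓ : ℕ) (hℓ : ℓ ≤ M.L) (c : ℕ) (hc : c ∈ conD D) (i : Fin (M.dims ℓ)) :
    M.val D ℓ c i ≤ M.val Dbar ℓ (π c) i := by
  clear hℓ
  induction ℓ generalizing c with
  | zero =>
    simp only [GNN.val]
    by_cases h : Fact.unary (Fin.cast M.dims0 i) c ∈ D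
    · rw [if_pos h, if_pos (hunary _ c hc h)]
    · rw [if_neg h]; split <;> norm_num
  | succ ℓ IH =>
    simp only [GNN.val]
    apply M.act_mono
    have hAle : (M.A ℓ).mulVec (fun j => M.val D ℓ c j) i ≤
        (M.A ℓ).mulVec (fun j => M.val Dbar ℓ (π c) j) i := by
      simp only [Matrix.mulVec, dotProduct]
      exact Finset.sum_le_sum fun j _ =>
        mul_le_mul_of_nonneg_left (IH c hc j) (hM.1 ℓ i j)
    have hBle : ∀ P : Col,
        (M.B P ℓ).mulVec
          (fun j => (∑ d ∈ nbrs D P c, M.val D ℓ d j) / ((nbrs D P c).card : ℝ)) i ≤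
        (M.B P ℓ).mulVec
          (fun j => (∑ d ∈ nbrs Dbar P (π c), M.val Dbar ℓ d j) /
            ((nbrs Dbar P (π c)).card : ℝ)) i := by
      intro P
      have hb := hbij c hc P
      have hmaps : ∀ d ∈ nbrs D P c, π d ∈ nbrs Dbar P (π c) := fun d hd =>
        mem_nbrs.mpr (hb.mapsTo (mem_nbrs.mp hd))
      have hinj : ∀ d₁ (h₁ : d₁ ∈ nbrs D P c), ∀ d₂ (h₂ : d₂ ∈ nbrs D P c),
          π d₁ = π d₂ → d₁ = d₂ := fun d₁ h₁ d₂ h₂ h =>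
        hb.injOn (mem_nbrs.mp h₁) (mem_nbrs.mp h₂) h
      have hsurj : ∀ e ∈ nbrs Dbar P (π c), ∃ d, ∃ _ : d ∈ nbrs D P c, π d = e := by
        intro e he
        obtain ⟨d, hd, hde⟩ := hb.surjOn (mem_nbrs.mp he)
        exact ⟨d, mem_nbrs.mpr hd, hde⟩
      have hcard : (nbrs D P c).card = (nbrs Dbar P (π c)).card :=
        Finset.card_bij (fun d _ => π d) hmaps hinj hsurj
      simp only [Matrix.mulVec, dotProduct]
      refine Finset.sum_le_sum fun j _ =>
        mul_le_mul_of_nonneg_left ?_ (hM.2 P ℓ i j)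
      have hsum : (∑ d ∈ nbrs D P c, M.val D ℓ d j) ≤
          ∑ e ∈ nbrs Dbar P (π c), M.val Dbar ℓ e j := by
        have h1 : (∑ d ∈ nbrs D P c, M.val D ℓ d j) ≤
            ∑ d ∈ nbrs D P c, M.val Dbar ℓ (π d) j :=
          Finset.sum_le_sum fun d hd =>
            IH d (mem_conD_of_binary_right (mem_nbrs.mp hd)) j
        have h2 : (∑ d ∈ nbrs D P c, M.val Dbar ℓ (π d) j) =
            ∑ e ∈ nbrs Dbar P (π c), M.val Dbar ℓ e j :=
          Finset.sum_bij (fun d _ => π d) hmaps hinj hsurj (fun _ _ => rfl)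
        exact h1.trans h2.le
      rw [hcard]
      rcases Nat.eq_zero_or_pos (nbrs Dbar P (π c)).card with h0 | hpos
      · simp [h0]
      · have hpos' : (0:ℝ) < ((nbrs Dbar P (π c)).card : ℝ) := by exact_mod_cast hpos
        exact div_le_div_of_nonneg_right hsum hpos'.le
    exact add_le_add (add_le_add_right hAle _) (Finset.sum_le_sum fun P _ => hBle P)

end KG
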